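/- For allocation of a divisible homogeneous good, the proportional-share fairness notion can force a strict loss in weighted Nash social welfare relative to the proportional allocation. Concretely, let two agents have entitlements b_1 = 1/4, b_2 = 3/4 and the same continuous piecewise-linear valuation v on [0,1]: v(x) = (3/4)x for 0 ≤ x ≤ 1/3, v(x) = (3/2)x − 1/4 for 1/3 ≤ x ≤ 2/3, v(x) = 3x − 5/4 for 2/3 ≤ x ≤ 3/4, and v(x) = 1 for 3/4 ≤ x ≤ 1. Then: (i) the unique allocation (x_1, x_2) with x_1, x_2 ≥ 0, x_1 + x_2 = 1, v(x_1) ≥ (1/4)·v(1), and v(x_2) ≥ (3/4)·v(1) is (1/3, 2/3); and (ii) its weighted Nash social welfare is strictly lower than that of the proportional allocation: v(1/3)^{1/4} · v(2/3)^{3/4} < v(1/4)^{1/4} · v(3/4)^{3/4} (equivalently, 27^{1/4}/4 < 48^{1/4}/4). -/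

import Mathlib

/-!
Since `v 1 = 1` and `v` increases strictly up to `3/4`, with `v (1/3) = 1/4` and
`v (2/3) = 3/4`, the proportional-share constraints force `x₁ ≥ 1/3` and `x₂ ≥ 2/3`,
hence `(x₁, x₂) = (1/3, 2/3)`. Comparing the two welfares amounts, after taking fourth
powers, to `(1/4) (3/4)³ = 27/256 < 48/256 = (3/16) · 1³`.
-/

namespace Stmt17

/-- The common piecewise-linear valuation of the two agents. -/
noncomputable def v : ℝ → ℝ := fun x =>
  if x ≤ 1/3 then (3/4) * x
  else if x ≤ 2/3 then (3/2) * x - 1/4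
  else if x ≤ 3/4 then 3 * x - 5/4
  else 1

lemma v_one : v 1 = 1 := by norm_num [v]

lemma v_one_third : v (1/3) = 1/4 := by norm_num [v]

lemma v_two_thirds : v (2/3) = 3/4 := by norm_num [v]

lemma v_one_quarter : v (1/4) = 3/16 := by norm_num [v]

lemma v_three_quarters : v (3/4) = 1 := by norm_num [v]

lemma v_lt_one_quarter {x : ℝ} (hx : x < 1/3) : v x < 1/4 := by
  unfold v; split_ifs <;> linarith

lemma v_lt_three_quarters {x : ℝ} (hx : x < 2/3) : v x < 3/4 := by
  unfold v; split_ifs <;> linarith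

lemma rpow_one_div_mul_rpow_div_eq {a b : ℝ} (ha : 0 ≤ a) (hb : 0 ≤ b) (m n : ℕ) :
    a ^ ((1:ℝ)/m) * b ^ ((n:ℝ)/m) = (a * b ^ n) ^ ((1:ℝ)/m) := by
  rw [Real.mul_rpow ha (pow_nonneg hb n), ← Real.rpow_natCast b n, ← Real.rpow_mul hb,
    mul_one_div]

/-- with entitlements (1/4, 3/4) and the common valuation `v`,
(i) the unique allocation giving both agents their proportional share is
(1/3, 2/3), and (ii) it has strictly lower weighted Nash social welfare than
the proportional allocation (1/4, 3/4). -/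
theorem stmt_17 :
    -- (1/3, 2/3) gives each agent her proportional share
    ((1/4) * v 1 ≤ v (1/3) ∧ (3/4) * v 1 ≤ v (2/3)) ∧
    -- and it is the unique such allocation
    (∀ x1 x2 : ℝ, 0 ≤ x1 → 0 ≤ x2 → x1 + x2 = 1 →
      (1/4) * v 1 ≤ v x1 → (3/4) * v 1 ≤ v x2 → x1 = 1/3 ∧ x2 = 2/3) ∧
    -- its WNSW is strictly lower than that of the proportional allocation
    (v (1/3) ^ ((1:ℝ)/4) * v (2/3) ^ ((3:ℝ)/4)
      < v (1/4) ^ ((1:ℝ)/4) * v (3/4) ^ ((3:ℝ)/4)) := by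
  simp only [v_one, v_one_third, v_two_thirds, v_one_quarter, v_three_quarters, mul_one]
  refine ⟨by norm_num, fun x1 x2 _ _ hsum h1 h2 => ?_, ?_⟩
  · have hx1 : 1/3 ≤ x1 := not_lt.mp fun h => (v_lt_one_quarter h).not_ge h1
    have hx2 : 2/3 ≤ x2 := not_lt.mp fun h => (v_lt_three_quarters h).not_ge h2
    constructor <;> linarith
  · have key := rpow_one_div_mul_rpow_div_eq (a := 1/4) (b := 3/4) (by norm_num) (by norm_num) 4 3
    have key' := rpow_one_div_mul_rpow_div_eq (a := 3/16) (b := 1) (by norm_num) (by norm_num) 4 3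
    push_cast at key key'
    rw [key, key']
    exact Real.rpow_lt_rpow (by norm_num) (by norm_num) (by norm_num)

end Stmt17
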